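/- arXiv:1708.02316 — 2 statements merged into one kernel-verified Lean document; each statement's English description precedes it below -/
import Mathlib

section
/- Let N be an even positive natural number, let d be an integer with d < N/2, and let φ_c > 0 be a real number. Then the set S = {φ ∈ [0, φ_c] : ∃ k ∈ ℤ, exp(i·φ) = exp(i·(−((N·(π − φ_c) − 2π·d)/(N·φ_c))·φ + 2π·k/N))} equals the set {j·φ_c/(N/2 − d) : j ∈ ℕ, 0 ≤ j ≤ N/2 − d}, and hence has exactly N/2 − d + 1 elements. (This is the computational core of the paper's Lemma on boundary singularities: for a boundary singularity of index d/N at a corner of interior angle φ_c, exactly N/2 − d + 1 separatrices, including the two boundary segments, meet at the corner, partitioning a neighborhood of the corner into N/2 − d evenly angled sectors each of angle φ_c/(N/2 − d).) -/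
open Real Complex

/-!
With `a = (N(π - φ_c) - 2πd)/(Nφ_c)`, the alignment equation reads `φ ≡ -aφ + 2πk/N` modulo
`2π`, and as `k` ranges over `ℤ` this becomes `(1 + a)φ ∈ (2π/N)ℤ`.
Since `1 + a = 2π(N/2 - d)/(Nφ_c)`, the condition is
`φ·(N/2 - d) ∈ φ_c·ℤ`, whose solutions in `[0, φ_c]` are the `N/2 - d + 1` equally spaced angles
`jφ_c/(N/2 - d)`.
-/

lemma exp_I_mul_eq_exp_I_mul_iff {x y : ℝ} :
    exp (I * x) = exp (I * y) ↔ ∃ n : ℤ, x = y + n * (2 * π) := by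
  rw [← Circle.exp_eq_exp, Circle.ext_iff, Circle.coe_exp, Circle.coe_exp, mul_comm I, mul_comm I]

lemma exists_exp_I_mul_eq_exp_I_mul_add_two_pi_div_iff {N : ℕ} (hN : N ≠ 0) (x y : ℝ) :
    (∃ k : ℤ, exp (I * x) = exp (I * ↑(y + 2 * π * k / N))) ↔
      ∃ j : ℤ, x = y + 2 * π * j / N := by
  simp only [exp_I_mul_eq_exp_I_mul_iff]
  constructor
  · rintro ⟨k, n, h⟩
    refine ⟨k + n * N, ?_⟩
    rw [h]
    push_cast
    field_simp
    ring
  · rintro ⟨j, h⟩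
    exact ⟨j, 0, by simpa using h⟩

lemma eq_neg_mul_add_iff {N d φc φ : ℝ} (hN : N ≠ 0) (hφc : φc ≠ 0) (j : ℝ) :
    φ = -((N * (π - φc) - 2 * π * d) / (N * φc)) * φ + 2 * π * j / N ↔
      φ * (N / 2 - d) = j * φc := by
  have key : φ * (N / 2 - d) - j * φc = N * φc / (2 * π) *
      (φ - (-((N * (π - φc) - 2 * π * d) / (N * φc)) * φ + 2 * π * j / N)) := by
    field_simp
    ring
  rw [← sub_eq_zero, ← sub_eq_zero (a := φ * _), key, mul_eq_zero_iff_left (by positivity)]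

lemma separatrix_condition_iff {N : ℕ} (hN : N ≠ 0) {d φc : ℝ} (hφc : φc ≠ 0) (φ : ℝ) :
    (∃ k : ℤ, exp (I * φ) =
        exp (I * (-(((N : ℝ) * (π - φc) - 2 * π * d) / ((N : ℝ) * φc)) * φ + 2 * π * k / N))) ↔
      ∃ j : ℤ, φ * (N / 2 - d) = j * φc := by
  have := exists_exp_I_mul_eq_exp_I_mul_add_two_pi_div_iff hN φ (-(((N : ℝ) * (π - φc) - 2 * π * d) / ((N : ℝ) * φc)) * φ)
  push_cast at this ⊢
  rw [this]
  exact exists_congr fun j => eq_neg_mul_add_iff (Nat.cast_ne_zero.2 hN) hφc j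

lemma setOf_mem_Icc_and_mul_eq_int_mul {m φc : ℝ} (hm : 0 < m) (hφc : 0 < φc) :
    {φ : ℝ | φ ∈ Set.Icc 0 φc ∧ ∃ j : ℤ, φ * m = j * φc} =
      (fun j : ℕ => (j : ℝ) * φc / m) '' {j : ℕ | (j : ℝ) ≤ m} := by
  ext φ
  constructor
  · rintro ⟨⟨h0, h1⟩, j, hj⟩
    lift j to ℕ using Int.cast_nonneg_iff.1 (nonneg_of_mul_nonneg_left (hj ▸ by positivity) hφc)
    push_cast at hj
    refine ⟨j, le_of_mul_le_mul_right (a := φc) ?_ hφc, ?_⟩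
    · rw [← hj]
      nlinarith
    · show (j : ℝ) * φc / m = φ
      rw [div_eq_iff hm.ne', hj]
  · rintro ⟨j, hjm, rfl⟩
    refine ⟨⟨by positivity, ?_⟩, j, ?_⟩
    · rw [div_le_iff₀ hm, mul_comm]
      exact mul_le_mul_of_nonneg_left hjm hφc.le
    · push_cast
      field_simp

lemma injective_natCast_mul_div {c m : ℝ} (hc : c ≠ 0) (hm : m ≠ 0) :
    Function.Injective fun j : ℕ => (j : ℝ) * c / m := fun a b h => by
  simpa [hc, hm] using h

lemma ncard_setOf_natCast_le {R : Type*} [Semiring R] [PartialOrder R] [IsStrictOrderedRing R]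
    (M : ℕ) : {j : ℕ | (j : R) ≤ M}.ncard = M + 1 := by
  have : {j : ℕ | (j : R) ≤ M} = Finset.Iic M := by ext; simp
  rw [this, Set.ncard_coe_finset, Nat.card_Iic]

/-- The separatrix directions at a boundary singularity of index `d/N` at a
corner of interior angle `φ_c`: the set of angles `φ ∈ [0, φ_c]` solving the
alignment equation `e^{iφ} = e^{i(−φ(N(π−φ_c)−2πd)/(Nφ_c) + 2πk/N)}` for some
integer `k` is exactly `{j·φ_c/(N/2 − d) : 0 ≤ j ≤ N/2 − d}`, and hence has
exactly `N/2 − d + 1` elements. -/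
theorem stmt_3 (N : ℕ) (hN : 0 < N) (hNeven : Even N) (d : ℤ) (hd : (d : ℝ) < (N : ℝ) / 2)
    (φc : ℝ) (hφc : 0 < φc) :
    let m : ℝ := (N : ℝ) / 2 - (d : ℝ)
    let S : Set ℝ := {φ : ℝ | φ ∈ Set.Icc 0 φc ∧ ∃ k : ℤ,
      Complex.exp (Complex.I * φ) =
        Complex.exp (Complex.I *
          (-(((N : ℝ) * (π - φc) - 2 * π * d) / ((N : ℝ) * φc)) * φ + 2 * π * k / N))}
    S = (fun j : ℕ => (j : ℝ) * φc / m) '' {j : ℕ | (j : ℝ) ≤ m} ∧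
    S.ncard = ((N : ℤ) / 2 - d + 1).toNat := by
  intro m S
  have hm : 0 < m := sub_pos.2 hd
  have hS : S = (fun j : ℕ => (j : ℝ) * φc / m) '' {j : ℕ | (j : ℝ) ≤ m} := by
    rw [← setOf_mem_Icc_and_mul_eq_int_mul hm hφc]
    exact Set.ext fun φ => and_congr_right fun _ => separatrix_condition_iff hN.ne' hφc.ne' φ
  refine ⟨hS, ?_⟩
  obtain ⟨p, rfl⟩ := hNeven
  have hdp : d < p := by
    push_cast at hd
    exact_mod_cast (show (d : ℝ) < p by linarith)
  obtain ⟨M, hM⟩ := Int.eq_ofNat_of_zero_le (sub_nonneg.2 hdp.le)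
  have hmM : m = M := by
    have := congrArg (Int.cast : ℤ → ℝ) hM
    simp only [m]
    push_cast at this ⊢
    linarith
  rw [hS, Set.ncard_image_of_injective _ (injective_natCast_mul_div hφc.ne' hm.ne'), hmM,
    ncard_setOf_natCast_le]
  omega
end

section
/- Let u : ℝ → ℂ satisfy u′(t) = (1 − ‖u(t)‖²)·u(t) for all t ∈ ℝ (in the sense that u has derivative (1 − ‖u(t)‖²)·u(t) at every t), and suppose u(0) ≠ 0. Then u(t) ≠ 0 for every t ∈ ℝ, and the normalized field is constant in time: u(t)/‖u(t)‖ = u(0)/‖u(0)‖ for every t ∈ ℝ. (This is the paper's claim that under the gradient flow of the Ginzburg–Landau penalty term the field evolves pointwise purely in the radial direction: the representation vectors lengthen or shorten radially toward the unit circle 𝕋 without changing their direction.) -/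
/-!
The equation `u′ = (1 - ‖u‖²) u` is linear in `u` once its coefficient `a t = 1 - ‖u t‖²` is
regarded as a given continuous real function. Hence `u t = exp (∫₀ᵗ a) • u 0`: every `u t` is a
positive real multiple of `u 0`, so it never vanishes and has the same direction as `u 0`.
-/

open Real

theorem eq_exp_sub_smul_of_hasDerivAt_smul {E : Type*} [NormedAddCommGroup E] [NormedSpace ℝ E]
    {u : ℝ → E} {a F : ℝ → ℝ} (hF : ∀ t, HasDerivAt F (a t) t)
    (hu : ∀ t, HasDerivAt u (a t • u t) t) (t s : ℝ) :
    u t = exp (F t - F s) • u s := by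
  -- `exp (-F)` is an integrating factor.
  set g : ℝ → E := fun t => exp (-F t) • u t
  have hg : ∀ t, HasDerivAt g 0 t := fun t => by
    convert ((hF t).neg.exp).smul (hu t) using 1
    · rfl
    rw [smul_smul, mul_neg, neg_smul, mul_comm, add_neg_cancel]
  have hgts : g t = g s :=
    is_const_of_deriv_eq_zero (fun x => (hg x).differentiableAt) (fun x => (hg x).deriv) t s
  have hu_eq : ∀ x, u x = exp (F x) • g x := fun x => by
    simp only [g, smul_smul, ← exp_add, add_neg_cancel, exp_zero, one_smul]
  rw [hu_eq t, hgts, smul_smul, ← exp_add, sub_eq_add_neg]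

theorem Complex.real_smul_div_norm_of_pos {c : ℝ} (hc : 0 < c) (z : ℂ) :
    c • z / (‖c • z‖ : ℂ) = z / (‖z‖ : ℂ) := by
  rw [norm_smul, Real.norm_of_nonneg hc.le, Complex.real_smul, Complex.ofReal_mul,
    mul_div_mul_left _ _ (Complex.ofReal_ne_zero.mpr hc.ne')]

/-- Under the gradient flow of the Ginzburg–Landau penalty term the field
evolves pointwise purely in the radial direction: if
`u′(t) = (1 − ‖u(t)‖²)·u(t)` for all `t` and `u(0) ≠ 0`, then `u(t) ≠ 0` for
all `t` and the normalized field `u(t)/‖u(t)‖` is constant in time. -/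
theorem stmt_11 (u : ℝ → ℂ)
    (hu : ∀ t : ℝ, HasDerivAt u ((1 - ‖u t‖ ^ 2) • u t) t)
    (h0 : u 0 ≠ 0) :
    (∀ t : ℝ, u t ≠ 0) ∧
    ∀ t : ℝ, u t / (‖u t‖ : ℂ) = u 0 / (‖u 0‖ : ℂ) := by
  have hu_cont : Continuous u := continuous_iff_continuousAt.mpr fun t => (hu t).continuousAt
  have ha_cont : Continuous fun t => 1 - ‖u t‖ ^ 2 := by fun_prop
  have hsol : ∀ t, u t = exp (∫ s in (0 : ℝ)..t, 1 - ‖u s‖ ^ 2) • u 0 := fun t => by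
    simpa only [intervalIntegral.integral_same, sub_zero] using
      eq_exp_sub_smul_of_hasDerivAt_smul
        (fun t => (ha_cont.integral_hasStrictDerivAt 0 t).hasDerivAt) hu t 0
  refine ⟨fun t => ?_, fun t => ?_⟩
  · rw [hsol t]
    exact smul_ne_zero (exp_pos _).ne' h0
  · rw [hsol t]
    exact Complex.real_smul_div_norm_of_pos (exp_pos _) (u 0)
end
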